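/- Let M be an n×n real matrix partitioned into an ℓ×ℓ array of blocks, and let δ ∈ ℕ^{ℓ×ℓ} satisfy δ_{ij} = k for every pair (i,j) such that the block M_{ij} is nonzero (with δ_{ii}=0, so diagonal blocks are zero when k ≥ 1). Then μ is a nonzero eigenvalue of the delayed iteration operator M^{(δ,κ)} (for κ ≥ k) if and only if μ^{k+1} is a nonzero eigenvalue of M. Consequently ρ(M^{(δ,κ)}) = ρ(M)^{1/(k+1)} when ρ(M) > 0. -/

import Mathlib

open Matrix

/-- Spectral radius of a complex matrix: sup of moduli of its spectrum. -/
noncomputable def specRad {m : Type*} [Fintype m] [DecidableEq m] (A : Matrix m m ℂ) : ℝ :=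
  sSup ((fun z : ℂ => ‖z‖) '' spectrum ℂ A)

/-- Delayed iteration operator `M^(δ,κ)` on the history space `ℝ^((κ+1)n)` (complexified).
The partition of `M` into `ℓ × ℓ` blocks is encoded by `p : Fin n → Fin ℓ` assigning each
row/column index to its block.  The history vector `v` stores `v (s, ·) = x^(κ - s)`,
and the operator maps `(x^(κ), …, x^(0))` to `(x^(κ+1), …, x^(1))` where
`x^(κ+1)_i = ∑_j M_{ij} x^(κ - δ_{ji})_j`. -/
noncomputable def delayedOp (n ℓ κ : ℕ) (M : Matrix (Fin n) (Fin n) ℝ)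
    (p : Fin n → Fin ℓ) (δ : Fin ℓ → Fin ℓ → ℕ) :
    Matrix (Fin (κ + 1) × Fin n) (Fin (κ + 1) × Fin n) ℂ :=
  fun st tb =>
    if st.1.val = 0 then
      (if tb.1.val = δ (p tb.2) (p st.2) then (M st.2 tb.2 : ℂ) else 0)
    else
      (if tb.1.val + 1 = st.1.val ∧ st.2 = tb.2 then 1 else 0)

/-!
An eigenvector `v` of `M^(δ,κ)` for `μ ≠ 0` is forced by the shift rows to be the history of a
geometric sequence: `μ^s v(s,·) = v(0,·)`. With all relevant delays equal to `k`, the head row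
then reads `M v(0,·) = μ^(k+1) v(0,·)`; conversely the history of `x^(t) = μ^t x` for an
eigenvector `x` of `M` with eigenvalue `μ^(k+1)` is an eigenvector of `M^(δ,κ)`. Since `ℂ` is
algebraically closed, every nonzero eigenvalue of `M` has a `(k+1)`-st root in the spectrum of
`M^(δ,κ)`, which gives the spectral radii.
-/
theorem Matrix.mem_spectrum_iff_exists_mulVec_eq_smul {m 𝕜 : Type*} [Fintype m] [DecidableEq m]
    [Field 𝕜] (A : Matrix m m 𝕜) (μ : 𝕜) :
    μ ∈ spectrum 𝕜 A ↔ ∃ v, v ≠ 0 ∧ A *ᵥ v = μ • v := by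
  rw [← spectrum_toLin', ← Module.End.hasEigenvalue_iff_mem_spectrum]
  constructor
  · intro h
    obtain ⟨v, hv⟩ := h.exists_hasEigenvector
    rw [Module.End.hasEigenvector_iff] at hv
    exact ⟨v, hv.2, by simpa using hv.1⟩
  · rintro ⟨v, hv, h⟩
    exact Module.End.hasEigenvalue_of_hasEigenvector
      (Module.End.hasEigenvector_iff.mpr ⟨by simpa using h, hv⟩)

theorem sSup_norm_image_eq_rpow_of_mem_iff_pow_mem {S T : Set ℂ} (hT : T.Finite)
    {m : ℕ} (hm : m ≠ 0) (hST : ∀ μ ≠ 0, μ ∈ S ↔ μ ^ m ∈ T) (hpos : 0 < sSup (norm '' T)) :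
    sSup (norm '' S) = sSup (norm '' T) ^ (m⁻¹ : ℝ) := by
  have hroot (z : ℂ) : ‖z‖ = ‖z ^ m‖ ^ (m⁻¹ : ℝ) := by
    rw [norm_pow, Real.pow_rpow_inv_natCast (norm_nonneg z) hm]
  have hne : (norm '' T).Nonempty := by
    by_contra h
    rw [Set.not_nonempty_iff_eq_empty.mp h, Real.sSup_empty] at hpos
    exact hpos.false
  obtain ⟨t, ht, htR⟩ : sSup (norm '' T) ∈ norm '' T := hne.csSup_mem (hT.image _)
  obtain ⟨μ, rfl⟩ := IsAlgClosed.exists_pow_nat_eq t (Nat.pos_of_ne_zero hm)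
  have hμ : μ ≠ 0 := by
    rintro rfl
    rw [zero_pow hm, norm_zero] at htR
    exact hpos.ne htR
  refine IsGreatest.csSup_eq ⟨⟨μ, (hST μ hμ).mpr ht, by rw [hroot, htR]⟩, ?_⟩
  rintro _ ⟨ν, hν, rfl⟩
  rcases eq_or_ne ν 0 with rfl | hν0
  · rw [norm_zero]
    positivity
  · rw [hroot ν]
    exact Real.rpow_le_rpow (norm_nonneg _)
      (le_csSup (hT.image _).bddAbove ⟨_, (hST ν hν0).mp hν, rfl⟩) (by positivity)

section DelayedOp

variable {n ℓ κ k : ℕ} {M : Matrix (Fin n) (Fin n) ℝ} {p : Fin n → Fin ℓ}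
  {δ : Fin ℓ → Fin ℓ → ℕ}

theorem delayedOp_mulVec_zero_of_uniform (hunif : ∀ a b : Fin n, M a b ≠ 0 → δ (p b) (p a) = k)
    (hκ : k ≤ κ) (v : Fin (κ + 1) × Fin n → ℂ) (i : Fin n) :
    (delayedOp n ℓ κ M p δ *ᵥ v) (0, i) =
      (M.map Complex.ofReal *ᵥ fun b => v (⟨k, by omega⟩, b)) i := by
  simp only [mulVec, dotProduct, delayedOp, Fin.val_zero, if_true, map_apply,
    Fintype.sum_prod_type]
  rw [Finset.sum_comm]
  refine Finset.sum_congr rfl fun b _ => ?_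
  rcases eq_or_ne (M i b) 0 with hMb | hMb
  · simp [hMb]
  · simp only [hunif i b hMb, ite_mul, zero_mul]
    rw [Fintype.sum_eq_single ⟨k, by omega⟩ fun t ht => if_neg fun h => ht (Fin.ext h),
      if_pos rfl]

theorem delayedOp_mulVec_succ (v : Fin (κ + 1) × Fin n → ℂ) (s : Fin κ) (i : Fin n) :
    (delayedOp n ℓ κ M p δ *ᵥ v) (s.succ, i) = v (s.castSucc, i) := by
  simp only [mulVec, dotProduct, delayedOp, Fin.val_succ, Nat.add_one_ne_zero, if_false]
  rw [Finset.sum_eq_single (s.castSucc, i)]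
  · simp
  · rintro ⟨t, b⟩ _ htb
    rw [if_neg, zero_mul]
    rintro ⟨h, rfl⟩
    exact htb (Prod.ext (Fin.ext (by simpa using h)) rfl)
  · simp

theorem pow_mul_apply_of_delayedOp_mulVec_eq_smul {μ : ℂ} {v : Fin (κ + 1) × Fin n → ℂ}
    (hv : delayedOp n ℓ κ M p δ *ᵥ v = μ • v) (s : Fin (κ + 1)) (i : Fin n) :
    μ ^ (s : ℕ) * v (s, i) = v (0, i) := by
  induction s using Fin.induction with
  | zero => simp
  | succ s ih =>
    have h := congrFun hv (s.succ, i)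
    rw [delayedOp_mulVec_succ, Pi.smul_apply, smul_eq_mul] at h
    rw [← ih, Fin.val_succ, Fin.val_castSucc, pow_succ, mul_assoc, ← h]

theorem head_ne_zero_of_delayedOp_mulVec_eq_smul {μ : ℂ} (hμ : μ ≠ 0)
    {v : Fin (κ + 1) × Fin n → ℂ} (hv0 : v ≠ 0) (hv : delayedOp n ℓ κ M p δ *ᵥ v = μ • v) :
    (fun i => v (0, i)) ≠ 0 := by
  intro h
  apply hv0
  ext ⟨s, i⟩
  have hs := pow_mul_apply_of_delayedOp_mulVec_eq_smul hv s i
  rw [congrFun h i, Pi.zero_apply] at hs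
  exact (mul_eq_zero.mp hs).resolve_left (pow_ne_zero _ hμ)

theorem mulVec_head_of_delayedOp_mulVec_eq_smul
    (hunif : ∀ a b : Fin n, M a b ≠ 0 → δ (p b) (p a) = k) (hκ : k ≤ κ) {μ : ℂ}
    {v : Fin (κ + 1) × Fin n → ℂ} (hv : delayedOp n ℓ κ M p δ *ᵥ v = μ • v) :
    M.map Complex.ofReal *ᵥ (fun i => v (0, i)) = μ ^ (k + 1) • fun i => v (0, i) := by
  have hk : (fun b => v (0, b)) = μ ^ k • fun b => v (⟨k, by omega⟩, b) :=
    funext fun b => (pow_mul_apply_of_delayedOp_mulVec_eq_smul hv ⟨k, by omega⟩ b).symm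
  ext i
  nth_rw 1 [hk]
  rw [mulVec_smul, Pi.smul_apply, ← delayedOp_mulVec_zero_of_uniform hunif hκ, hv]
  simp only [Pi.smul_apply, smul_eq_mul, pow_succ, mul_assoc]

/-- The history `(x^(κ), …, x^(0))` of the geometric sequence `x^(t) = μ^t x`. -/
noncomputable def geomHistory (κ : ℕ) (μ : ℂ) (x : Fin n → ℂ) : Fin (κ + 1) × Fin n → ℂ :=
  fun st => μ ^ (κ - st.1) * x st.2

theorem geomHistory_ne_zero (μ : ℂ) {x : Fin n → ℂ} (hx : x ≠ 0) : geomHistory κ μ x ≠ 0 :=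
  fun h => hx (funext fun i => by simpa [geomHistory] using congrFun h (Fin.last κ, i))

theorem delayedOp_mulVec_geomHistory (hunif : ∀ a b : Fin n, M a b ≠ 0 → δ (p b) (p a) = k)
    (hκ : k ≤ κ) {μ : ℂ} {x : Fin n → ℂ} (hx : M.map Complex.ofReal *ᵥ x = μ ^ (k + 1) • x) :
    delayedOp n ℓ κ M p δ *ᵥ geomHistory κ μ x = μ • geomHistory κ μ x := by
  ext ⟨s, i⟩
  induction s using Fin.cases with
  | zero =>
    rw [delayedOp_mulVec_zero_of_uniform hunif hκ]
    have hk : (fun b => geomHistory κ μ x (⟨k, by omega⟩, b)) = μ ^ (κ - k) • x := rfl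
    rw [hk, mulVec_smul, hx, smul_smul, Pi.smul_apply, smul_eq_mul, ← pow_add]
    simp only [geomHistory, Pi.smul_apply, smul_eq_mul, Fin.val_zero, Nat.sub_zero, ← mul_assoc,
      ← pow_succ']
    congr 2
    omega
  | succ s =>
    rw [delayedOp_mulVec_succ]
    simp only [geomHistory, Pi.smul_apply, smul_eq_mul, Fin.val_succ, Fin.val_castSucc,
      ← mul_assoc, ← pow_succ']
    congr 2
    omega

theorem delayedOp_mem_spectrum_iff (hunif : ∀ a b : Fin n, M a b ≠ 0 → δ (p b) (p a) = k)
    (hκ : k ≤ κ) {μ : ℂ} (hμ : μ ≠ 0) :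
    μ ∈ spectrum ℂ (delayedOp n ℓ κ M p δ) ↔ μ ^ (k + 1) ∈ spectrum ℂ (M.map Complex.ofReal) := by
  simp only [Matrix.mem_spectrum_iff_exists_mulVec_eq_smul]
  constructor
  · rintro ⟨v, hv0, hv⟩
    exact ⟨_, head_ne_zero_of_delayedOp_mulVec_eq_smul hμ hv0 hv,
      mulVec_head_of_delayedOp_mulVec_eq_smul hunif hκ hv⟩
  · rintro ⟨x, hx0, hx⟩
    exact ⟨_, geomHistory_ne_zero μ hx0, delayedOp_mulVec_geomHistory hunif hκ hx⟩

end DelayedOp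

theorem uniform_delay_spectrum_general (n ℓ κ k : ℕ) (M : Matrix (Fin n) (Fin n) ℝ)
    (p : Fin n → Fin ℓ) (δ : Fin ℓ → Fin ℓ → ℕ)
    (hunif : ∀ a b : Fin n, M a b ≠ 0 → δ (p b) (p a) = k)
    (hκ : k ≤ κ) :
    (∀ μ : ℂ, μ ≠ 0 →
      (μ ∈ spectrum ℂ (delayedOp n ℓ κ M p δ) ↔
        μ ^ (k + 1) ∈ spectrum ℂ (M.map (Complex.ofReal)))) ∧
    (0 < specRad (M.map (Complex.ofReal)) →
      specRad (delayedOp n ℓ κ M p δ)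
        = specRad (M.map (Complex.ofReal)) ^ ((1 : ℝ) / (k + 1))) := by
  have key (μ : ℂ) (hμ : μ ≠ 0) := delayedOp_mem_spectrum_iff hunif hκ hμ
  refine ⟨key, fun hρ => ?_⟩
  have hexp : (1 : ℝ) / (k + 1) = ((k + 1 : ℕ) : ℝ)⁻¹ := by
    push_cast
    exact one_div _
  rw [hexp]
  exact sSup_norm_image_eq_rpow_of_mem_iff_pow_mem (Matrix.finite_spectrum _) k.succ_ne_zero
    key hρ

/-- Uniform delays: if the delay used with every nonzero block of M equals k, then mu /= 0
is an eigenvalue of the delayed operator iff mu^(k+1) is an eigenvalue of M; consequently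
rho(delayed) = rho(M)^(1/(k+1)) when rho(M) > 0. -/
theorem uniform_delay_spectrum (n ℓ κ k : ℕ) (M : Matrix (Fin n) (Fin n) ℝ)
    (p : Fin n → Fin ℓ) (δ : Fin ℓ → Fin ℓ → ℕ)
    (hδ0 : ∀ i, δ i i = 0)
    (hunif : ∀ a b : Fin n, M a b ≠ 0 → δ (p b) (p a) = k)
    (hκ : k ≤ κ) (hκδ : ∀ i j, δ i j ≤ κ) :
    (∀ μ : ℂ, μ ≠ 0 →
      (μ ∈ spectrum ℂ (delayedOp n ℓ κ M p δ) ↔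
        μ ^ (k + 1) ∈ spectrum ℂ (M.map (Complex.ofReal)))) ∧
    (0 < specRad (M.map (Complex.ofReal)) →
      specRad (delayedOp n ℓ κ M p δ)
        = specRad (M.map (Complex.ofReal)) ^ ((1 : ℝ) / (k + 1))) :=
  uniform_delay_spectrum_general n ℓ κ k M p δ hunif hκ
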